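/- Let k be a field and let A be a commutative k-algebra admitting two placid presentations A = colim_{α∈I} A_α and A = colim_{β∈J} A′_β. Then for every β ∈ J there exists α₀ ∈ I such that for every α ≥ α₀ the canonical homomorphism A′_β → A factors as the composition of a smooth k-algebra homomorphism A′_β → A_α with the canonical map A_α → A. -/

import Mathlib

/-!
Both systems consist of finitely presented `k`-algebras with colimit `A`, so a map from a stage
of one system to `A` factors through some stage of the other, and two such factorizations agree
at a later stage. Zig-zagging produces `A′_β → A_{α₁} → A′_γ → A_{α₀}` in which the composites
`A′_β → A′_γ` and `A_{α₁} → A_{α₀}` are transition maps, hence smooth. If `v ∘ u` and `w ∘ v`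
are formally smooth then so is `w ∘ v ∘ u`, which gives formal smoothness of
`A′_β → A_{α₁} → A′_γ → A_{α₀} → A_α`; finite presentation is automatic between
finite-type algebras over a field.
-/

/-- A homomorphism of commutative rings is smooth if the target is a formally smooth
algebra of finite presentation over the source. -/
def IsSmoothHom {R S : Type} [CommRing R] [CommRing S] (f : R →+* S) : Prop :=
  @Algebra.FormallySmooth R S _ _ f.toAlgebra ∧ f.FinitePresentation

theorem RingHom.FormallySmooth.comp_comp_of_comp_of_comp {B C D E : Type*} [CommRing B]
    [CommRing C] [CommRing D] [CommRing E] {u : B →+* C} {v : C →+* D} {w : D →+* E}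
    (hvu : (v.comp u).FormallySmooth) (hwv : (w.comp v).FormallySmooth) :
    ((w.comp v).comp u).FormallySmooth := by
  algebraize [v.comp u, w.comp v, (w.comp v).comp u]
  -- Lift along `v ∘ u` first; the lift `ψ` makes `T` a `C`-algebra, over which `w ∘ v` lifts.
  refine Algebra.FormallySmooth.of_comp_surjective fun T _ _ I hI f ↦ ?_
  let w' : D →ₐ[B] E := { w with commutes' := fun _ ↦ rfl }
  obtain ⟨ψ, hψ⟩ := Algebra.FormallySmooth.comp_surjective B D I hI (f.comp w')
  let := (ψ.toRingHom.comp v).toAlgebra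
  obtain ⟨χ, hχ⟩ := Algebra.FormallySmooth.comp_surjective C E I hI
    { f with commutes' := fun c ↦ (AlgHom.congr_fun hψ (v c)).symm }
  exact ⟨{ χ with commutes' := fun b ↦ (χ.commutes (u b)).trans (ψ.commutes b) },
    AlgHom.ext fun x ↦ AlgHom.congr_fun hχ x⟩

theorem AlgHom.finitePresentation_of_finiteType {k B C : Type*} [CommRing k] [IsNoetherianRing k]
    [CommRing B] [CommRing C] [Algebra k B] [Algebra k C] [Algebra.FiniteType k B]
    [Algebra.FiniteType k C] (f : B →ₐ[k] C) : f.FinitePresentation := by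
  have : IsNoetherianRing B := Algebra.FiniteType.isNoetherianRing k B
  have hf : (f.toRingHom.comp (algebraMap k B)).FiniteType := by
    rw [show f.toRingHom.comp (algebraMap k B) = algebraMap k C from f.comp_algebraMap]
    exact RingHom.finiteType_algebraMap.mpr ‹_›
  exact RingHom.FinitePresentation.of_finiteType.mp (.of_comp_finiteType hf)

structure IsDirectedColimit {k A K : Type*} [CommRing k] [CommRing A] [Algebra k A] [Preorder K]
    {C : K → Type*} [∀ i, CommRing (C i)] [∀ i, Algebra k (C i)]
    (t : ∀ i j : K, i ≤ j → (C i →ₐ[k] C j)) (ι : ∀ i, C i →ₐ[k] A) : Prop where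
  trans_comp_trans : ∀ (i j l : K) (hij : i ≤ j) (hjl : j ≤ l),
    (t j l hjl).comp (t i j hij) = t i l (hij.trans hjl)
  ι_comp_trans : ∀ (i j : K) (hij : i ≤ j), (ι j).comp (t i j hij) = ι i
  exists_ι_eq : ∀ a : A, ∃ i x, ι i x = a
  exists_trans_eq_of_ι_eq : ∀ (i : K) (x y : C i), ι i x = ι i y →
    ∃ j, ∃ hij : i ≤ j, t i j hij x = t i j hij y

namespace IsDirectedColimit

variable {k A K : Type*} [CommRing k] [CommRing A] [Algebra k A] [Preorder K]
  {C : K → Type*} [∀ i, CommRing (C i)] [∀ i, Algebra k (C i)]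
  {t : ∀ i j : K, i ≤ j → (C i →ₐ[k] C j)} {ι : ∀ i, C i →ₐ[k] A}

theorem trans_trans_apply (hC : IsDirectedColimit t ι) {i j l : K} (hij : i ≤ j) (hjl : j ≤ l)
    (x : C i) : t j l hjl (t i j hij x) = t i l (hij.trans hjl) x :=
  AlgHom.congr_fun (hC.trans_comp_trans i j l hij hjl) x

theorem ι_trans_apply (hC : IsDirectedColimit t ι) {i j : K} (hij : i ≤ j) (x : C i) :
    ι j (t i j hij x) = ι i x :=
  AlgHom.congr_fun (hC.ι_comp_trans i j hij) x

theorem ι_comp_trans_comp (hC : IsDirectedColimit t ι) {B : Type*} [Semiring B] [Algebra k B]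
    {i j : K} (hij : i ≤ j) (f : B →ₐ[k] C i) :
    (ι j).comp ((t i j hij).comp f) = (ι i).comp f := by
  rw [← AlgHom.comp_assoc, hC.ι_comp_trans]

theorem trans_comp_trans_comp (hC : IsDirectedColimit t ι) {B : Type*} [Semiring B] [Algebra k B]
    {i j l : K} (hij : i ≤ j) (hjl : j ≤ l) (f : B →ₐ[k] C i) :
    (t j l hjl).comp ((t i j hij).comp f) = (t i l (hij.trans hjl)).comp f := by
  rw [← AlgHom.comp_assoc, hC.trans_comp_trans]

variable [IsDirected K (· ≤ ·)]

theorem exists_finset_subset_range (hC : IsDirectedColimit t ι) (s : Finset A) :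
    ∃ i, (s : Set A) ⊆ Set.range (ι i) := by
  classical
  induction s using Finset.induction_on with
  | empty =>
    obtain ⟨i, -⟩ := hC.exists_ι_eq 0
    exact ⟨i, by simp⟩
  | insert a s _ ih =>
    obtain ⟨i, hi⟩ := ih
    obtain ⟨j, x, rfl⟩ := hC.exists_ι_eq (a := a)
    obtain ⟨l, hil, hjl⟩ := directed_of (· ≤ ·) i j
    refine ⟨l, ?_⟩
    rw [Finset.coe_insert, Set.insert_subset_iff]
    refine ⟨⟨t j l hjl x, hC.ι_trans_apply hjl x⟩, hi.trans ?_⟩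
    rintro _ ⟨y, rfl⟩
    exact ⟨t i l hil y, hC.ι_trans_apply hil y⟩

theorem exists_forall_trans_eq (hC : IsDirectedColimit t ι) {α : Type*} (s : Finset α)
    {i : K} (x y : α → C i) (h : ∀ a ∈ s, ι i (x a) = ι i (y a)) :
    ∃ j, ∃ hij : i ≤ j, ∀ a ∈ s, t i j hij (x a) = t i j hij (y a) := by
  classical
  induction s using Finset.induction_on with
  | empty => exact ⟨i, le_rfl, by simp⟩
  | insert a s _ ih =>
    obtain ⟨j, hij, hj⟩ := ih fun b hb ↦ h b (Finset.mem_insert_of_mem hb)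
    obtain ⟨j', hij', hj'⟩ :=
      hC.exists_trans_eq_of_ι_eq i (x a) (y a) (h a (s.mem_insert_self a))
    obtain ⟨l, hjl, hj'l⟩ := directed_of (· ≤ ·) j j'
    refine ⟨l, hij.trans hjl, Finset.forall_mem_insert _ _ _ |>.mpr ⟨?_, fun b hb ↦ ?_⟩⟩
    · rw [← hC.trans_trans_apply hij' hj'l, hj', hC.trans_trans_apply]
    · rw [← hC.trans_trans_apply hij hjl, hj b hb, hC.trans_trans_apply]

theorem exists_comp_eq_of_comp_eq (hC : IsDirectedColimit t ι) {B : Type*} [CommRing B]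
    [Algebra k B] [Algebra.FiniteType k B] {i : K} (u v : B →ₐ[k] C i)
    (h : (ι i).comp u = (ι i).comp v) :
    ∃ j, ∃ hij : i ≤ j, (t i j hij).comp u = (t i j hij).comp v := by
  obtain ⟨s, hs⟩ := Algebra.FiniteType.out (R := k) (A := B)
  obtain ⟨j, hij, hj⟩ := hC.exists_forall_trans_eq s u v fun x _ ↦ AlgHom.congr_fun h x
  exact ⟨j, hij, AlgHom.ext_of_adjoin_eq_top hs fun x hx ↦ hj x hx⟩

theorem exists_mvPolynomial_lift (hC : IsDirectedColimit t ι) {σ : Type*} [Finite σ]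
    (φ : MvPolynomial σ k →ₐ[k] A) :
    ∃ i, ∃ Φ : MvPolynomial σ k →ₐ[k] C i, (ι i).comp Φ = φ := by
  classical
  have := Fintype.ofFinite σ
  obtain ⟨i, hi⟩ := hC.exists_finset_subset_range (Finset.univ.image fun a ↦ φ (.X a))
  choose x hx using fun a ↦
    hi (Finset.mem_coe.mpr (Finset.mem_image_of_mem _ (Finset.mem_univ a)))
  exact ⟨i, MvPolynomial.aeval x, MvPolynomial.algHom_ext fun a ↦ by simp [hx]⟩

theorem exists_factorization (hC : IsDirectedColimit t ι) {B : Type*} [CommRing B]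
    [Algebra k B] [Algebra.FinitePresentation k B] (φ : B →ₐ[k] A) :
    ∃ i, ∃ g : B →ₐ[k] C i, (ι i).comp g = φ := by
  obtain ⟨n, π, hπ, s, hs⟩ := Algebra.FinitePresentation.out (R := k) (A := B)
  obtain ⟨i, Φ, hΦ⟩ := hC.exists_mvPolynomial_lift (φ.comp π)
  have hΦs : ∀ p ∈ s, ι i (Φ p) = ι i 0 := by
    intro p hp
    have hπp : π p = 0 := RingHom.mem_ker.mp (hs ▸ Ideal.subset_span hp)
    rw [map_zero, ← AlgHom.comp_apply, hΦ, AlgHom.comp_apply, hπp, map_zero]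
  obtain ⟨j, hij, hj⟩ := hC.exists_forall_trans_eq s Φ 0 hΦs
  have hker : RingHom.ker π.toRingHom ≤ RingHom.ker ((t i j hij).comp Φ).toRingHom := by
    rw [← hs, Ideal.span_le]
    intro p hp
    simpa using hj p hp
  refine ⟨j, π.liftOfSurjective hπ _ hker, ?_⟩
  ext b
  obtain ⟨p, rfl⟩ := hπ b
  simpa [hC.ι_trans_apply] using AlgHom.congr_fun hΦ p

theorem exists_diagonal (hC : IsDirectedColimit t ι) {B D : Type*}
    [CommRing B] [CommRing D] [Algebra k B] [Algebra k D] [Algebra.FinitePresentation k B]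
    [Algebra.FiniteType k D] {i : K} (f : D →ₐ[k] C i) (g : D →ₐ[k] B) (h : B →ₐ[k] A)
    (hsq : (ι i).comp f = h.comp g) :
    ∃ j, ∃ hij : i ≤ j, ∃ H : B →ₐ[k] C j, H.comp g = (t i j hij).comp f ∧ (ι j).comp H = h := by
  obtain ⟨j₀, H₀, hH₀⟩ := hC.exists_factorization h
  obtain ⟨j₁, hij₁, hj₀j₁⟩ := directed_of (· ≤ ·) i j₀
  obtain ⟨j, hj₁j, hj⟩ := hC.exists_comp_eq_of_comp_eq
    (((t j₀ j₁ hj₀j₁).comp H₀).comp g) ((t i j₁ hij₁).comp f)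
    (by rw [← AlgHom.comp_assoc, hC.ι_comp_trans_comp, hH₀, hC.ι_comp_trans_comp, hsq])
  refine ⟨j, hij₁.trans hj₁j, (t j₁ j hj₁j).comp ((t j₀ j₁ hj₀j₁).comp H₀), ?_, ?_⟩
  · rw [AlgHom.comp_assoc, hj, hC.trans_comp_trans_comp]
  · rw [hC.ι_comp_trans_comp, hC.ι_comp_trans_comp, hH₀]

end IsDirectedColimit

theorem statement9_general (k : Type) [Field k]
    (A : Type) [CommRing A] [Algebra k A]
    -- a placid presentation `A = colim_{α ∈ I} A_α`
    (I : Type) [Preorder I] [IsDirected I (· ≤ ·)]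
    (A₁ : I → Type) [∀ i, CommRing (A₁ i)] [∀ i, Algebra k (A₁ i)]
    (t₁ : ∀ i j : I, i ≤ j → (A₁ i →ₐ[k] A₁ j)) (ι₁ : ∀ i, A₁ i →ₐ[k] A)
    (ht₁_comp : ∀ (i j l : I) (hij : i ≤ j) (hjl : j ≤ l),
      (t₁ j l hjl).comp (t₁ i j hij) = t₁ i l (le_trans hij hjl))
    (hι₁ : ∀ (i j : I) (hij : i ≤ j), (ι₁ j).comp (t₁ i j hij) = ι₁ i)
    (hft₁ : ∀ i, Algebra.FiniteType k (A₁ i))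
    (hsm₁ : ∀ (i j : I) (hij : i ≤ j), IsSmoothHom (t₁ i j hij).toRingHom)
    (hsurj₁ : ∀ a : A, ∃ i x, ι₁ i x = a)
    (heq₁ : ∀ (i : I) (x y : A₁ i), ι₁ i x = ι₁ i y →
      ∃ j, ∃ hij : i ≤ j, t₁ i j hij x = t₁ i j hij y)
    -- a placid presentation `A = colim_{β ∈ J} A′_β`
    (J : Type) [Preorder J] [IsDirected J (· ≤ ·)]
    (A₂ : J → Type) [∀ b, CommRing (A₂ b)] [∀ b, Algebra k (A₂ b)]
    (t₂ : ∀ b c : J, b ≤ c → (A₂ b →ₐ[k] A₂ c)) (ι₂ : ∀ b, A₂ b →ₐ[k] A)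
    (ht₂_comp : ∀ (b c d : J) (hbc : b ≤ c) (hcd : c ≤ d),
      (t₂ c d hcd).comp (t₂ b c hbc) = t₂ b d (le_trans hbc hcd))
    (hι₂ : ∀ (b c : J) (hbc : b ≤ c), (ι₂ c).comp (t₂ b c hbc) = ι₂ b)
    (hft₂ : ∀ b, Algebra.FiniteType k (A₂ b))
    (hsm₂ : ∀ (b c : J) (hbc : b ≤ c), IsSmoothHom (t₂ b c hbc).toRingHom)
    (hsurj₂ : ∀ a : A, ∃ b x, ι₂ b x = a)
    (heq₂ : ∀ (b : J) (x y : A₂ b), ι₂ b x = ι₂ b y →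
      ∃ c, ∃ hbc : b ≤ c, t₂ b c hbc x = t₂ b c hbc y) :
    ∀ β : J, ∃ α₀ : I, ∀ α : I, α₀ ≤ α →
      ∃ g : A₂ β →ₐ[k] A₁ α, IsSmoothHom g.toRingHom ∧ (ι₁ α).comp g = ι₂ β := by
  intro β
  have hC₁ : IsDirectedColimit t₁ ι₁ := ⟨ht₁_comp, hι₁, hsurj₁, heq₁⟩
  have hC₂ : IsDirectedColimit t₂ ι₂ := ⟨ht₂_comp, hι₂, hsurj₂, heq₂⟩
  have : ∀ i, Algebra.FinitePresentation k (A₁ i) := fun i ↦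
    Algebra.FinitePresentation.of_finiteType.mp (hft₁ i)
  have : ∀ b, Algebra.FinitePresentation k (A₂ b) := fun b ↦
    Algebra.FinitePresentation.of_finiteType.mp (hft₂ b)
  obtain ⟨α₁, g, hg⟩ := hC₁.exists_factorization (ι₂ β)
  obtain ⟨γ, hβγ, H, hHg, hH⟩ :=
    hC₂.exists_diagonal (AlgHom.id k _) g (ι₁ α₁) (by rw [AlgHom.comp_id, hg])
  obtain ⟨α₀, hα₁α₀, W, hWH, hW⟩ :=
    hC₁.exists_diagonal (AlgHom.id k _) H (ι₂ γ) (by rw [AlgHom.comp_id, hH])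
  refine ⟨α₀, fun α hα ↦ ⟨((t₁ α₀ α hα).comp W).comp (H.comp g), ⟨?_, ?_⟩, ?_⟩⟩
  · have hvu : (H.comp g).toRingHom.FormallySmooth := by
      rw [hHg, AlgHom.comp_id]
      exact (hsm₂ β γ hβγ).1
    have hwv : (((t₁ α₀ α hα).comp W).comp H).toRingHom.FormallySmooth := by
      rw [AlgHom.comp_assoc, hWH, AlgHom.comp_id, hC₁.trans_comp_trans]
      exact (hsm₁ α₁ α _).1
    exact RingHom.FormallySmooth.comp_comp_of_comp_of_comp (u := g.toRingHom)
      (v := H.toRingHom) (w := ((t₁ α₀ α hα).comp W).toRingHom) hvu hwv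
  · exact AlgHom.finitePresentation_of_finiteType _
  · rw [← AlgHom.comp_assoc, hC₁.ι_comp_trans_comp, hW, hHg, hC₂.ι_comp_trans_comp,
      AlgHom.comp_id]

theorem statement9 (k : Type) [Field k]
    (A : Type) [CommRing A] [Algebra k A]
    -- a placid presentation `A = colim_{α ∈ I} A_α`
    (I : Type) [Preorder I] [IsDirected I (· ≤ ·)] [Nonempty I]
    (A₁ : I → Type) [∀ i, CommRing (A₁ i)] [∀ i, Algebra k (A₁ i)]
    (t₁ : ∀ i j : I, i ≤ j → (A₁ i →ₐ[k] A₁ j)) (ι₁ : ∀ i, A₁ i →ₐ[k] A)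
    (ht₁_refl : ∀ i, t₁ i i le_rfl = AlgHom.id k (A₁ i))
    (ht₁_comp : ∀ (i j l : I) (hij : i ≤ j) (hjl : j ≤ l),
      (t₁ j l hjl).comp (t₁ i j hij) = t₁ i l (le_trans hij hjl))
    (hι₁ : ∀ (i j : I) (hij : i ≤ j), (ι₁ j).comp (t₁ i j hij) = ι₁ i)
    (hft₁ : ∀ i, Algebra.FiniteType k (A₁ i))
    (hsm₁ : ∀ (i j : I) (hij : i ≤ j), IsSmoothHom (t₁ i j hij).toRingHom)
    (hsurj₁ : ∀ a : A, ∃ i x, ι₁ i x = a)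
    (heq₁ : ∀ (i : I) (x y : A₁ i), ι₁ i x = ι₁ i y →
      ∃ j, ∃ hij : i ≤ j, t₁ i j hij x = t₁ i j hij y)
    -- a placid presentation `A = colim_{β ∈ J} A′_β`
    (J : Type) [Preorder J] [IsDirected J (· ≤ ·)] [Nonempty J]
    (A₂ : J → Type) [∀ b, CommRing (A₂ b)] [∀ b, Algebra k (A₂ b)]
    (t₂ : ∀ b c : J, b ≤ c → (A₂ b →ₐ[k] A₂ c)) (ι₂ : ∀ b, A₂ b →ₐ[k] A)
    (ht₂_refl : ∀ b, t₂ b b le_rfl = AlgHom.id k (A₂ b))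
    (ht₂_comp : ∀ (b c d : J) (hbc : b ≤ c) (hcd : c ≤ d),
      (t₂ c d hcd).comp (t₂ b c hbc) = t₂ b d (le_trans hbc hcd))
    (hι₂ : ∀ (b c : J) (hbc : b ≤ c), (ι₂ c).comp (t₂ b c hbc) = ι₂ b)
    (hft₂ : ∀ b, Algebra.FiniteType k (A₂ b))
    (hsm₂ : ∀ (b c : J) (hbc : b ≤ c), IsSmoothHom (t₂ b c hbc).toRingHom)
    (hsurj₂ : ∀ a : A, ∃ b x, ι₂ b x = a)
    (heq₂ : ∀ (b : J) (x y : A₂ b), ι₂ b x = ι₂ b y →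
      ∃ c, ∃ hbc : b ≤ c, t₂ b c hbc x = t₂ b c hbc y) :
    ∀ β : J, ∃ α₀ : I, ∀ α : I, α₀ ≤ α →
      ∃ g : A₂ β →ₐ[k] A₁ α, IsSmoothHom g.toRingHom ∧ (ι₁ α).comp g = ι₂ β :=
  statement9_general k A I A₁ t₁ ι₁ ht₁_comp hι₁ hft₁ hsm₁ hsurj₁ heq₁ J A₂ t₂ ι₂ ht₂_comp hι₂ hft₂
    hsm₂ hsurj₂ heq₂
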